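/- Let A ⟶f B ⟶g C ⟶h A⟦1⟧ be a distinguished triangle in C. Then h factors through an object of N if and only if g admits a factorization g = g₂ ∘ g₁ where g₁: B ⟶ C' fits into a distinguished triangle B ⟶g₁ C' ⟶ N₀ ⟶ B⟦1⟧ with N₀ ∈ N, and g₂: C' ⟶ C is a split epimorphism (a retraction). -/

import Mathlib

open CategoryTheory CategoryTheory.Limits CategoryTheory.Pretriangulated

universe v u v₂ u₂

variable {C : Type u} [Category.{v} C] [Preadditive C] [HasZeroObject C]
  [HasShift C ℤ] [∀ n : ℤ, (shiftFunctor C n).Additive] [Pretriangulated C]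

/-- `f : X ⟶ Y` factors through an object of `N`. -/
def FactorsThru (N : Set C) {X Y : C} (f : X ⟶ Y) : Prop :=
  ∃ (Z : C) (_ : Z ∈ N) (u : X ⟶ Z) (v : Z ⟶ Y), f = u ≫ v

/-- The morphism `X⟦-1⟧ ⟶ A` obtained from `h : X ⟶ A⟦1⟧` by shifting by `-1` and
composing with the canonical isomorphism `A⟦1⟧⟦-1⟧ ≅ A`. -/
noncomputable def descShift {X A : C} (h : X ⟶ A⟦(1:ℤ)⟧) : X⟦(-1:ℤ)⟧ ⟶ A :=
  h⟦(-1:ℤ)⟧' ≫ (shiftEquiv C (1:ℤ)).unitIso.inv.app A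

/-- The class `S_N` of morphisms fitting in a distinguished triangle whose two other
maps factor through `N`. -/
def SN (N : Set C) {B C₀ : C} (g : B ⟶ C₀) : Prop :=
  ∃ (A : C) (f : A ⟶ B) (h : C₀ ⟶ A⟦(1:ℤ)⟧),
    (Triangle.mk f g h ∈ distTriang C) ∧ FactorsThru N f ∧ FactorsThru N h

/-- The class `L`. -/
def ClassL (N : Set C) {A B : C} (f : A ⟶ B) : Prop :=
  ∃ (N₀ : C) (_ : N₀ ∈ N) (g : B ⟶ N₀) (h : N₀ ⟶ A⟦(1:ℤ)⟧),
    (Triangle.mk f g h ∈ distTriang C) ∧ FactorsThru N (descShift h)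

/-- The class `R`. -/
def ClassR (N : Set C) {B C₀ : C} (g : B ⟶ C₀) : Prop :=
  ∃ (N₀ : C) (_ : N₀ ∈ N) (f : N₀ ⟶ B) (h : C₀ ⟶ N₀⟦(1:ℤ)⟧),
    (Triangle.mk f g h ∈ distTriang C) ∧ FactorsThru N h

/-- Condition (Lex) on a morphism `h : C₀ ⟶ A⟦1⟧`. -/
def LexCond (N : Set C) {C₀ A : C} (h : C₀ ⟶ A⟦(1:ℤ)⟧) : Prop :=
  ∀ (N₀ : C), N₀ ∈ N → ∀ (x : N₀ ⟶ C₀), FactorsThru N (descShift (x ≫ h))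

/-- Condition (Rex) on a morphism `h : C₀ ⟶ A⟦1⟧`. -/
def RexCond (N : Set C) {C₀ A : C} (h : C₀ ⟶ A⟦(1:ℤ)⟧) : Prop :=
  ∀ (N₀ : C), N₀ ∈ N → ∀ (y : A ⟶ N₀),
    ∃ (M : C) (_ : M ∈ N) (u : C₀⟦(-1:ℤ)⟧ ⟶ M⟦(-1:ℤ)⟧) (v : M⟦(-1:ℤ)⟧ ⟶ N₀),
      descShift h ≫ y = u ≫ v

/-- `S_N` as a morphism property. -/
def SNProp (N : Set C) : MorphismProperty C := fun _ _ g => SN N g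

/-! If `h = u ≫ v` with `v : Z ⟶ A⟦1⟧`, complete `-(v ≫ f⟦1⟧')` to a distinguished triangle
`B ⟶ C' ⟶ Z ⟶ B⟦1⟧`; the morphism of triangles extending `𝟙 B` and `v` to the rotation of
`(f, g, h)` yields `g₂ : C' ⟶ C₀` with `g = g₁ ≫ g₂`, and exactness at `C'` (applied to `u`) and
at `C₀` produces a section of `g₂`. Conversely, if `s` is a section of `g₂`, then
`h = s ≫ g₂ ≫ h`, and `g₂ ≫ h`, being killed by `g₁`, factors through the cone `N₀` of `g₁`. -/

section

variable {A B C₀ : C} {f : A ⟶ B} {g : B ⟶ C₀} {h : C₀ ⟶ A⟦(1:ℤ)⟧}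

lemma exists_distTriang_comp_eq_of_mor₃ (hT : Triangle.mk f g h ∈ distTriang C)
    {Z : C} (v : Z ⟶ A⟦(1:ℤ)⟧) :
    ∃ (C' : C) (g₁ : B ⟶ C') (p : C' ⟶ Z) (g₂ : C' ⟶ C₀),
      Triangle.mk g₁ p (-(v ≫ f⟦(1:ℤ)⟧')) ∈ distTriang C ∧ g = g₁ ≫ g₂ ∧ p ≫ v = g₂ ≫ h := by
  obtain ⟨C', g₁, p, hT'⟩ := distinguished_cocone_triangle₂ (-(v ≫ f⟦(1:ℤ)⟧'))
  have hcomm : (-(v ≫ f⟦(1:ℤ)⟧')) ≫ (𝟙 B)⟦(1:ℤ)⟧' = v ≫ (-f⟦(1:ℤ)⟧') := by simp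
  obtain ⟨g₂, hg, hh⟩ : ∃ g₂ : C' ⟶ C₀, g₁ ≫ g₂ = 𝟙 B ≫ g ∧ p ≫ v = g₂ ≫ h :=
    complete_distinguished_triangle_morphism₂ _ _ hT' (rot_of_distTriang _ hT) (𝟙 B) v hcomm
  exact ⟨C', g₁, p, g₂, hT', by simpa using hg.symm, hh⟩

lemma isSplitEpi_of_distTriang_of_mor₃_eq_comp (hT : Triangle.mk f g h ∈ distTriang C)
    {C' Z : C} {g₁ : B ⟶ C'} {g₂ : C' ⟶ C₀} {p : C' ⟶ Z} {u : C₀ ⟶ Z} {v : Z ⟶ A⟦(1:ℤ)⟧}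
    (hT' : Triangle.mk g₁ p (-(v ≫ f⟦(1:ℤ)⟧')) ∈ distTriang C) (hg : g = g₁ ≫ g₂)
    (hpv : p ≫ v = g₂ ≫ h) (huv : h = u ≫ v) : IsSplitEpi g₂ := by
  have hu : u ≫ (-(v ≫ f⟦(1:ℤ)⟧')) = 0 := by
    rw [Preadditive.comp_neg, ← Category.assoc, ← huv, neg_eq_zero]
    exact comp_distTriang_mor_zero₃₁ _ hT
  obtain ⟨t, ht⟩ : ∃ t : C₀ ⟶ C', u = t ≫ p := Triangle.coyoneda_exact₃ _ hT' u hu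
  -- `t ≫ g₂` is a section up to an error killed by `h`, which therefore lifts along `g`.
  have hdefect : (𝟙 C₀ - t ≫ g₂) ≫ h = 0 := by
    rw [Preadditive.sub_comp, Category.id_comp, Category.assoc, ← hpv, ← Category.assoc, ← ht,
      ← huv, sub_self]
  obtain ⟨w, hw⟩ : ∃ w : C₀ ⟶ B, 𝟙 C₀ - t ≫ g₂ = w ≫ g :=
    Triangle.coyoneda_exact₃ _ hT _ hdefect
  refine ⟨⟨t + w ≫ g₁, ?_⟩⟩
  rw [Preadditive.add_comp, Category.assoc, ← hg, ← hw]
  abel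

lemma exists_mor₃_eq_section_comp_of_distTriang (hT : Triangle.mk f g h ∈ distTriang C)
    {C' N₀ : C} {g₁ : B ⟶ C'} {g₂ : C' ⟶ C₀} {p : C' ⟶ N₀} {q : N₀ ⟶ B⟦(1:ℤ)⟧}
    (hT' : Triangle.mk g₁ p q ∈ distTriang C) (hg : g = g₁ ≫ g₂) [IsSplitEpi g₂] :
    ∃ r : N₀ ⟶ A⟦(1:ℤ)⟧, h = (section_ g₂ ≫ p) ≫ r := by
  have hg₁ : g₁ ≫ g₂ ≫ h = 0 := by
    rw [← Category.assoc, ← hg]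
    exact comp_distTriang_mor_zero₂₃ _ hT
  obtain ⟨r, hr⟩ : ∃ r : N₀ ⟶ A⟦(1:ℤ)⟧, g₂ ≫ h = p ≫ r :=
    Triangle.yoneda_exact₂ _ hT' (g₂ ≫ h) hg₁
  refine ⟨r, ?_⟩
  rw [Category.assoc, ← hr, IsSplitEpi.id_assoc]

end

theorem stmt2 (N : Set C)
    {A B C₀ : C} (f : A ⟶ B) (g : B ⟶ C₀) (h : C₀ ⟶ A⟦(1:ℤ)⟧)
    (hT : Triangle.mk f g h ∈ distTriang C) :
    FactorsThru N h ↔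
      ∃ (C' : C) (g₁ : B ⟶ C') (g₂ : C' ⟶ C₀),
        g = g₁ ≫ g₂ ∧ IsSplitEpi g₂ ∧
          ∃ (N₀ : C) (_ : N₀ ∈ N) (p : C' ⟶ N₀) (q : N₀ ⟶ B⟦(1:ℤ)⟧),
            Triangle.mk g₁ p q ∈ distTriang C := by
  constructor
  · rintro ⟨Z, hZ, u, v, huv⟩
    obtain ⟨C', g₁, p, g₂, hT', hg, hpv⟩ := exists_distTriang_comp_eq_of_mor₃ hT v
    exact ⟨C', g₁, g₂, hg, isSplitEpi_of_distTriang_of_mor₃_eq_comp hT hT' hg hpv huv,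
      Z, hZ, p, _, hT'⟩
  · rintro ⟨C', g₁, g₂, hg, hsplit, N₀, hN₀, p, q, hT'⟩
    obtain ⟨r, hr⟩ := exists_mor₃_eq_section_comp_of_distTriang hT hT' hg
    exact ⟨N₀, hN₀, _, r, hr⟩
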